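/- For every nonnegative integer m and positive integer q, the Arakawa–Kaneko zeta value at m+1 satisfies ξ_q(m+1) = Σ_{n=1}^∞ P_m(H_n^{(1)}, ..., H_n^{(m)}) / n^{q+1}. -/

import Mathlib

/-- The modified Bell polynomials, defined by the generating function
`exp (∑_{k≥1} x_k z^k / k) = ∑_{m≥0} P_m(x_1,…,x_m) z^m`, via the
equivalent recursion `(m+1) P_{m+1} = ∑_{k=1}^{m+1} x_k P_{m+1-k}`. -/
noncomputable def modifiedBell (x : ℕ → ℝ) : ℕ → ℝ
  | 0 => 1
  | (m + 1) => ((m : ℝ) + 1)⁻¹ *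
      ∑ k ∈ Finset.range (m + 1), x (k + 1) * modifiedBell x (m - k)
  decreasing_by omega

/-- The polylogarithm `Li_q(z) = ∑_{n≥1} z^n / n^q`. -/
noncomputable def polyLog (q : ℕ) (z : ℝ) : ℝ :=
  ∑' n : ℕ, z ^ (n + 1) / ((n : ℝ) + 1) ^ q

/-- Generalized harmonic number `H_n^{(k)} = ∑_{j=1}^n 1/j^k`. -/
noncomputable def genHarmonic (n k : ℕ) : ℝ :=
  ∑ j ∈ Finset.Icc 1 n, 1 / (j : ℝ) ^ k

/-- The Arakawa–Kaneko zeta function `ξ_q(s)` at `s = m+1`: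
`ξ_q(m+1) = (1/Γ(m+1)) ∫_0^∞ Li_q(1-e^{-t})/(e^t-1) · t^m dt`. -/
noncomputable def arakawaKaneko (q m : ℕ) : ℝ :=
  (1 / Real.Gamma (m + 1)) *
    ∫ t in Set.Ioi (0 : ℝ),
      polyLog q (1 - Real.exp (-t)) / (Real.exp t - 1) * t ^ m

/-! Expanding `Li_q(1 - e^{-t}) / (e^t - 1) = ∑_n e^{-t} (1 - e^{-t})^n / (n+1)^q` and integrating
termwise (all terms are nonnegative) reduces the theorem to
`(1/m!) ∫_0^∞ t^m e^{-t} (1 - e^{-t})^n dt = ∑_{j=0}^n (-1)^j C(n,j) / (j+1)^{m+1}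
  = P_m(H_{n+1}) / (n+1)`.
The first equality is the binomial theorem plus the Gamma integral. For the second, both
`∑_{k=1}^n (-1)^{k-1} C(n,k) / k^m` and `P_m(H_n)` satisfy
`f(n+1, m+1) = f(n, m+1) + f(n+1, m) / (n+1)`.
For `P_m` this says that substituting `x_k ↦ x_k + a^k` multiplies the generating function
`exp (∑ x_k z^k / k)` by `1 / (1 - a z)`; for formal power series this follows from the
differential equation `F' = (∑ x_{k+1} z^k) F`, which determines `F` from `F(0) = 1`.
-/

open MeasureTheory Filter Set Real Finset
open scoped Nat

/-- If `∑ ∫ f n` diverges, both sides are `0`. -/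
theorem MeasureTheory.integral_tsum_of_nonneg {α : Type*} [MeasurableSpace α] {μ : Measure α}
    {f : ℕ → α → ℝ} (hf : ∀ n, 0 ≤ᵐ[μ] f n) (hfi : ∀ n, Integrable (f n) μ)
    (hsum : ∀ᵐ a ∂μ, Summable fun n => f n a) :
    ∫ a, ∑' n, f n a ∂μ = ∑' n, ∫ a, f n a ∂μ := by
  have hf' : ∀ᵐ a ∂μ, ∀ n, 0 ≤ f n a := ae_all_iff.2 hf
  have hnonneg : 0 ≤ᵐ[μ] fun a => ∑' n, f n a := by
    filter_upwards [hf'] with a ha using tsum_nonneg ha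
  have hmeas : AEStronglyMeasurable (fun a => ∑' n, f n a) μ :=
    aestronglyMeasurable_of_tendsto_ae atTop
      (fun N => Finset.aestronglyMeasurable_fun_sum _ fun n _ => (hfi n).1)
      (hsum.mono fun a ha => ha.hasSum.tendsto_sum_nat)
  have hlintegral : ∫⁻ a, ENNReal.ofReal (∑' n, f n a) ∂μ =
      ∑' n, ENNReal.ofReal (∫ a, f n a ∂μ) := calc
    _ = ∫⁻ a, ∑' n, ENNReal.ofReal (f n a) ∂μ := lintegral_congr_ae <| by
      filter_upwards [hf', hsum] with a ha hs using ENNReal.ofReal_tsum_of_nonneg ha hs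
    _ = ∑' n, ∫⁻ a, ENNReal.ofReal (f n a) ∂μ :=
      lintegral_tsum fun n => (hfi n).1.aemeasurable.ennreal_ofReal
    _ = _ := tsum_congr fun n => (ofReal_integral_eq_lintegral_ofReal (hfi n) (hf n)).symm
  rw [integral_eq_lintegral_of_nonneg_ae hnonneg hmeas, hlintegral,
    ENNReal.tsum_toReal_eq fun _ => ENNReal.ofReal_ne_top]
  exact tsum_congr fun n => ENNReal.toReal_ofReal (integral_nonneg_of_ae (hf n))

theorem integral_pow_mul_exp_neg_mul (k : ℕ) {c : ℝ} (hc : 0 < c) :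
    ∫ t in Ioi (0 : ℝ), t ^ k * exp (-(c * t)) = k ! / c ^ (k + 1) := by
  have := integral_rpow_mul_exp_neg_mul_Ioi (a := k + 1) (by positivity) hc
  simp only [add_sub_cancel_right, rpow_natCast] at this
  rw [this, Gamma_nat_eq_factorial, ← Nat.cast_add_one, rpow_natCast, one_div, inv_pow]
  ring

theorem integrableOn_pow_mul_exp_neg_mul (k : ℕ) {c : ℝ} (hc : 0 < c) :
    IntegrableOn (fun t => t ^ k * exp (-(c * t))) (Ioi 0) :=
  .of_integral_ne_zero (by rw [integral_pow_mul_exp_neg_mul k hc]; positivity)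

theorem pow_mul_exp_neg_mul_one_sub_exp_neg_pow (m n : ℕ) (t : ℝ) :
    t ^ m * exp (-t) * (1 - exp (-t)) ^ n =
      ∑ j ∈ range (n + 1), (-1) ^ j * n.choose j * (t ^ m * exp (-((j + 1) * t))) := by
  rw [sub_eq_neg_add, add_pow, mul_sum]
  refine sum_congr rfl fun j _ => ?_
  rw [one_pow, mul_one, neg_pow, ← exp_nat_mul,
    show exp (-((j + 1) * t)) = exp (j * -t) * exp (-t) by rw [← exp_add]; ring_nf]
  ring

theorem integrableOn_pow_mul_exp_neg_mul_one_sub_exp_neg_pow (m n : ℕ) :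
    IntegrableOn (fun t => t ^ m * exp (-t) * (1 - exp (-t)) ^ n) (Ioi 0) := by
  simp_rw [pow_mul_exp_neg_mul_one_sub_exp_neg_pow]
  exact integrable_finsetSum _ fun j _ =>
    (integrableOn_pow_mul_exp_neg_mul m (by positivity)).const_mul _

theorem integral_pow_mul_exp_neg_mul_one_sub_exp_neg_pow (m n : ℕ) :
    ∫ t in Ioi 0, t ^ m * exp (-t) * (1 - exp (-t)) ^ n =
      m ! * ∑ j ∈ range (n + 1), (-1) ^ j * n.choose j / ((j : ℝ) + 1) ^ (m + 1) := by
  simp_rw [pow_mul_exp_neg_mul_one_sub_exp_neg_pow]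
  rw [integral_finsetSum _ fun j _ =>
    (integrableOn_pow_mul_exp_neg_mul m (by positivity)).const_mul _, mul_sum]
  refine sum_congr rfl fun j _ => ?_
  rw [integral_const_mul, integral_pow_mul_exp_neg_mul m (by positivity)]
  ring

theorem summable_polyLog (q : ℕ) {z : ℝ} (hz : |z| < 1) :
    Summable fun n : ℕ => z ^ (n + 1) / ((n : ℝ) + 1) ^ q := by
  refine .of_norm_bounded ((summable_geometric_of_lt_one (abs_nonneg z) hz).mul_left |z|)
    fun n => ?_
  rw [norm_div, norm_pow, norm_pow, Real.norm_eq_abs, Real.norm_of_nonneg (by positivity),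
    pow_succ', div_le_iff₀ (by positivity)]
  exact le_mul_of_one_le_right (by positivity) (one_le_pow₀ (by simp))

theorem hasSum_polyLog_one_sub_exp_neg (q m : ℕ) {t : ℝ} (ht : 0 < t) :
    HasSum (fun n : ℕ => t ^ m * exp (-t) * (1 - exp (-t)) ^ n / ((n : ℝ) + 1) ^ q)
      (polyLog q (1 - exp (-t)) / (exp t - 1) * t ^ m) := by
  have hexp : exp (-t) < 1 := exp_lt_one_iff.2 (neg_neg_of_pos ht)
  have hz : |1 - exp (-t)| < 1 := by
    rw [abs_lt]; constructor <;> linarith [exp_pos (-t)]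
  have hd : exp t - 1 ≠ 0 := by linarith [one_lt_exp_iff.2 ht]
  have key : 1 - exp (-t) = exp (-t) * (exp t - 1) := by rw [mul_sub, ← exp_add]; simp
  have hterm : (fun n : ℕ => t ^ m * exp (-t) * (1 - exp (-t)) ^ n / ((n : ℝ) + 1) ^ q) =
      fun n : ℕ => (1 - exp (-t)) ^ (n + 1) / ((n : ℝ) + 1) ^ q / (exp t - 1) * t ^ m := by
    funext n
    rw [pow_succ, key]
    field_simp
  rw [hterm]
  exact ((summable_polyLog q hz).hasSum.div_const _).mul_right _

open PowerSeries

theorem PowerSeries.eq_of_derivative_eq_mul {R : Type*} [CommRing R] [IsAddTorsionFree R]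
    {L f g : R⟦X⟧} (hf : d⁄dX R f = L * f) (hg : d⁄dX R g = L * g)
    (h0 : constantCoeff f = constantCoeff g) : f = g := by
  ext n
  induction n using Nat.strong_induction_on with
  | _ n ih =>
    cases n with
    | zero => simpa using h0
    | succ n =>
      have hL : coeff n (L * f) = coeff n (L * g) := by
        rw [coeff_mul, coeff_mul]
        refine sum_congr rfl fun p hp => ?_
        rw [ih p.2 (by have := mem_antidiagonal.1 hp; omega)]
      have h := congrArg (coeff n) hf
      have h' := congrArg (coeff n) hg
      rw [coeff_derivative] at h h'
      refine IsAddTorsionFree.nsmul_right_injective n.succ_ne_zero ?_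
      simp only [nsmul_eq_mul', Nat.cast_succ, h, h', hL]

theorem modifiedBell_zero (x : ℕ → ℝ) : modifiedBell x 0 = 1 := by
  rw [modifiedBell]

theorem modifiedBell_succ (x : ℕ → ℝ) (m : ℕ) :
    modifiedBell x (m + 1) =
      ((m : ℝ) + 1)⁻¹ * ∑ k ∈ range (m + 1), x (k + 1) * modifiedBell x (m - k) := by
  rw [modifiedBell]

noncomputable def bellSeries (x : ℕ → ℝ) : ℝ⟦X⟧ :=
  mk (modifiedBell x)

theorem constantCoeff_bellSeries (x : ℕ → ℝ) : constantCoeff (bellSeries x) = 1 := by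
  rw [← coeff_zero_eq_constantCoeff_apply, bellSeries, coeff_mk, modifiedBell_zero]

theorem derivative_bellSeries (x : ℕ → ℝ) :
    d⁄dX ℝ (bellSeries x) = mk (fun k => x (k + 1)) * bellSeries x := by
  ext n
  rw [coeff_derivative, coeff_mul, Nat.sum_antidiagonal_eq_sum_range_succ_mk]
  simp only [bellSeries, coeff_mk, modifiedBell_succ]
  field_simp

theorem bellSeries_add (x y : ℕ → ℝ) : bellSeries (x + y) = bellSeries x * bellSeries y := by
  refine eq_of_derivative_eq_mul (derivative_bellSeries _) ?_ (by simp [constantCoeff_bellSeries])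
  have hL : mk (fun k => (x + y) (k + 1)) = mk (fun k => x (k + 1)) + mk (fun k => y (k + 1)) := by
    ext; simp
  rw [Derivation.leibniz, derivative_bellSeries, derivative_bellSeries, hL, smul_eq_mul,
    smul_eq_mul]
  ring

theorem modifiedBell_pow (a : ℝ) (m : ℕ) : modifiedBell (a ^ ·) m = a ^ m := by
  induction m using Nat.strong_induction_on with
  | _ m ih =>
    cases m with
    | zero => rw [modifiedBell_zero, pow_zero]
    | succ m =>
      have hterm : ∀ k ∈ range (m + 1),
          a ^ (k + 1) * modifiedBell (a ^ ·) (m - k) = a ^ (m + 1) := fun k hk => by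
          rw [Finset.mem_range] at hk
          rw [ih _ (by omega), ← pow_add]
          congr 1
          omega
      rw [modifiedBell_succ, sum_congr rfl hterm, sum_const, card_range, nsmul_eq_mul,
        Nat.cast_add_one, inv_mul_cancel_left₀ (by positivity)]

theorem bellSeries_pow (a : ℝ) : bellSeries (a ^ ·) = mk (a ^ ·) := by
  ext; simp [bellSeries, modifiedBell_pow]

theorem modifiedBell_add_pow_succ (x : ℕ → ℝ) (a : ℝ) (m : ℕ) :
    modifiedBell (fun k => x k + a ^ k) (m + 1) =
      modifiedBell x (m + 1) + a * modifiedBell (fun k => x k + a ^ k) m := by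
  have hgeom : PowerSeries.mk (a ^ ·) = 1 + C a * X * PowerSeries.mk (a ^ ·) := by
    ext (_ | n) <;> simp [mul_assoc, coeff_succ_X_mul, pow_succ']
  have hF : bellSeries (fun k => x k + a ^ k) =
      bellSeries x + C a * X * bellSeries (fun k => x k + a ^ k) := by
    rw [show (fun k => x k + a ^ k) = x + (a ^ ·) from rfl, bellSeries_add, bellSeries_pow]
    nth_rewrite 1 [hgeom]
    ring
  simpa [bellSeries, mul_assoc, coeff_succ_X_mul] using congrArg (coeff (m + 1)) hF

theorem genHarmonic_succ (n k : ℕ) :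
    genHarmonic (n + 1) k = genHarmonic n k + ((n : ℝ) + 1)⁻¹ ^ k := by
  rw [genHarmonic, genHarmonic, sum_Icc_succ_top (by omega), one_div, inv_pow]
  push_cast
  rfl

/-- `∑_{k=1}^n (-1)^{k-1} C(n,k) / k^m`, reindexed from `0`. -/
noncomputable def altBinomialSum (n m : ℕ) : ℝ :=
  ∑ k ∈ range n, (-1) ^ k * n.choose (k + 1) / ((k : ℝ) + 1) ^ m

theorem sum_range_choose_div_pow_succ (n m : ℕ) :
    ∑ j ∈ range (n + 1), (-1) ^ j * n.choose j / ((j : ℝ) + 1) ^ (m + 1) =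
      altBinomialSum (n + 1) m / (n + 1) := by
  rw [altBinomialSum, sum_div]
  refine sum_congr rfl fun j _ => ?_
  have h : ((n : ℝ) + 1) * n.choose j = (n + 1).choose (j + 1) * ((j : ℝ) + 1) := by
    exact_mod_cast Nat.add_one_mul_choose_eq n j
  field_simp
  linear_combination ((j : ℝ) + 1) ^ m * h

theorem altBinomialSum_one (m : ℕ) : altBinomialSum 1 m = 1 := by
  simp [altBinomialSum]

theorem altBinomialSum_zero (n : ℕ) : altBinomialSum (n + 1) 0 = 1 := by
  have h := Int.alternating_sum_range_choose_of_ne (n := n + 1) n.succ_ne_zero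
  rw [sum_range_succ'] at h
  simp only [pow_succ, mul_neg_one, neg_mul, sum_neg_distrib, pow_zero,
    Nat.choose_zero_right, Nat.cast_one, mul_one] at h
  have h' : ∑ k ∈ range (n + 1), ((-1) ^ k * (n + 1).choose (k + 1) : ℤ) = 1 := by linarith
  simp only [altBinomialSum, pow_zero, div_one]
  exact_mod_cast h'

theorem altBinomialSum_succ_succ (n m : ℕ) :
    altBinomialSum (n + 1) (m + 1) =
      altBinomialSum n (m + 1) + altBinomialSum (n + 1) m / (n + 1) := by
  have htop : ∑ k ∈ range (n + 1), (-1) ^ k * n.choose (k + 1) / ((k : ℝ) + 1) ^ (m + 1) =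
      altBinomialSum n (m + 1) := by
    simp [altBinomialSum, sum_range_succ]
  rw [← sum_range_choose_div_pow_succ, ← htop, altBinomialSum, ← sum_add_distrib]
  refine sum_congr rfl fun k _ => ?_
  rw [Nat.choose_succ_succ']
  push_cast
  ring

theorem altBinomialSum_eq_modifiedBell (n m : ℕ) :
    altBinomialSum (n + 1) m = modifiedBell (fun k => genHarmonic (n + 1) k) m := by
  induction n generalizing m with
  | zero =>
    have h1 : (fun k => genHarmonic 1 k) = (1 ^ ·) := funext fun k => by simp [genHarmonic]
    rw [altBinomialSum_one, h1, modifiedBell_pow, one_pow]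
  | succ n ih =>
    induction m with
    | zero => rw [altBinomialSum_zero, modifiedBell_zero]
    | succ m ihm =>
      have hH : (fun k => genHarmonic (n + 1 + 1) k) =
          fun k => genHarmonic (n + 1) k + ((n + 1 : ℕ) + 1 : ℝ)⁻¹ ^ k :=
        funext fun k => genHarmonic_succ _ _
      rw [altBinomialSum_succ_succ, ih, ihm, hH, modifiedBell_add_pow_succ]
      push_cast
      ring

theorem integral_pow_mul_exp_neg_mul_one_sub_exp_neg_pow_eq_modifiedBell (m n : ℕ) :
    ∫ t in Ioi 0, t ^ m * exp (-t) * (1 - exp (-t)) ^ n =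
      m ! * modifiedBell (fun k => genHarmonic (n + 1) k) m / (n + 1) := by
  rw [integral_pow_mul_exp_neg_mul_one_sub_exp_neg_pow, sum_range_choose_div_pow_succ,
    altBinomialSum_eq_modifiedBell, mul_div_assoc]

theorem arakawaKaneko_eq_sum_general (m q : ℕ) :
    arakawaKaneko q m =
      ∑' n : ℕ, modifiedBell (fun k => genHarmonic (n + 1) k) m / ((n : ℝ) + 1) ^ (q + 1) := by
  set term : ℕ → ℝ → ℝ := fun n t =>
    t ^ m * exp (-t) * (1 - exp (-t)) ^ n / ((n : ℝ) + 1) ^ q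
  have hsum : ∀ᵐ t ∂volume.restrict (Ioi 0),
      HasSum (term · t) (polyLog q (1 - exp (-t)) / (exp t - 1) * t ^ m) :=
    ae_restrict_of_forall_mem measurableSet_Ioi fun t ht => hasSum_polyLog_one_sub_exp_neg q m ht
  have hnonneg : ∀ n, 0 ≤ᵐ[volume.restrict (Ioi 0)] term n := fun n =>
    ae_restrict_of_forall_mem measurableSet_Ioi fun t (ht : 0 < t) => by
      have : 0 ≤ 1 - exp (-t) := sub_nonneg.2 (exp_le_one_iff.2 (by linarith))
      positivity
  have hint : ∀ n, IntegrableOn (term n) (Ioi 0) := fun n =>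
    (integrableOn_pow_mul_exp_neg_mul_one_sub_exp_neg_pow m n).div_const _
  rw [arakawaKaneko, Gamma_nat_eq_factorial,
    integral_congr_ae (hsum.mono fun t ht => ht.tsum_eq.symm),
    integral_tsum_of_nonneg hnonneg hint (hsum.mono fun t ht => ht.summable), ← tsum_mul_left]
  refine tsum_congr fun n => ?_
  rw [integral_div, integral_pow_mul_exp_neg_mul_one_sub_exp_neg_pow_eq_modifiedBell]
  field_simp
  ring

theorem arakawaKaneko_eq_sum (m q : ℕ) (hq : 0 < q) :
    arakawaKaneko q m =
      ∑' n : ℕ, modifiedBell (fun k => genHarmonic (n + 1) k) m / ((n : ℝ) + 1) ^ (q + 1) :=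
  arakawaKaneko_eq_sum_general m q
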